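/- arXiv:1305.5293 — 3 statements merged into one kernel-verified Lean document; each statement's English description precedes it below -/
import Mathlib

section
/- Let p, z, i be natural numbers with i < p. Then, as an identity of integers, ∑_{k=⌈i/(z+1)⌉}^{p} (-1)^{k+1} · C(p,k) · C(k·(z+1), i) = 0, where the sum runs over integers k from ⌈i/(z+1)⌉ to p. Equivalently, since C(k·(z+1), i) = 0 whenever k·(z+1) < i, the same alternating sum taken over all k from 0 to p vanishes. -/
/-!
Up to sign, the sum is the coefficient of `X^i` in
`(1 - (1 + X)^(z+1))^p = ∑ₖ (-1)^k C(p,k) (1 + X)^(k(z+1))`,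
and this polynomial is divisible by `X^p` because `X ∣ 1 - (1 + X)^(z+1)`.
-/

open Polynomial Finset

theorem Polynomial.sum_range_neg_one_pow_mul_choose_mul_coeff_pow_eq_zero {R : Type*}
    [CommRing R] {Q : R[X]} (hQ : Q.coeff 0 = 1) {p i : ℕ} (hi : i < p) :
    ∑ k ∈ range (p + 1), (-1) ^ k * p.choose k * (Q ^ k).coeff i = 0 := by
  have hX : X ∣ 1 - Q := X_dvd_iff.mpr (by simp [hQ])
  have hcoeff := X_pow_dvd_iff.mp (pow_dvd_pow_of_dvd hX p) i hi
  rw [sub_eq_neg_add, add_pow, finsetSum_coeff] at hcoeff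
  rw [← hcoeff]
  refine sum_congr rfl fun k _ => ?_
  rw [one_pow, mul_one, neg_pow Q, ← C_eq_natCast, coeff_mul_C, ← map_one C, ← map_neg C,
    ← map_pow C, coeff_C_mul]
  ring

theorem mul_lt_of_lt_toNat_ceil_div {i d k : ℕ} (hd : 0 < d)
    (hk : k < (⌈(i : ℚ) / d⌉).toNat) : k * d < i := by
  have hk' : (k : ℚ) < i / d := by exact_mod_cast Int.lt_ceil.mp (Int.lt_toNat.mp hk)
  exact_mod_cast (lt_div_iff₀ (by exact_mod_cast hd)).mp hk'

/-- Lemma 9.4 of the paper: for natural numbers `p, z, i` with `i < p`, the alternating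
sum `∑_{k=⌈i/(z+1)⌉}^{p} (-1)^{k+1} C(p,k) C(k(z+1), i)` vanishes; equivalently (since
`C(k(z+1),i) = 0` when `k(z+1) < i`) the same sum over all `0 ≤ k ≤ p` vanishes. -/
theorem stmt_0 (p z i : ℕ) (hip : i < p) :
    (∑ k ∈ Finset.Icc (⌈(i : ℚ) / (z + 1)⌉).toNat p,
        (-1 : ℤ) ^ (k + 1) * (p.choose k) * ((k * (z + 1)).choose i) = 0) ∧
    (∑ k ∈ Finset.range (p + 1),
        (-1 : ℤ) ^ (k + 1) * (p.choose k) * ((k * (z + 1)).choose i) = 0) := by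
  have hrange : ∑ k ∈ range (p + 1),
      (-1 : ℤ) ^ (k + 1) * (p.choose k) * ((k * (z + 1)).choose i) = 0 := by
    have h := sum_range_neg_one_pow_mul_choose_mul_coeff_pow_eq_zero
      (Q := (X + 1 : ℤ[X]) ^ (z + 1)) (by simp [coeff_X_add_one_pow]) hip
    simp_rw [← pow_mul, mul_comm (z + 1), coeff_X_add_one_pow] at h
    rw [← neg_eq_zero, ← h, ← sum_neg_distrib]
    exact sum_congr rfl fun k _ => by ring
  refine ⟨?_, hrange⟩
  rw [← hrange]
  refine sum_subset (fun k hk => by simp only [mem_Icc, mem_range] at hk ⊢; omega)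
    fun k hk hk' => ?_
  have hlt : k * (z + 1) < i := by
    refine mul_lt_of_lt_toNat_ceil_div (Nat.succ_pos z) ?_
    simp only [mem_Icc, mem_range] at hk hk'
    push_cast
    omega
  simp [Nat.choose_eq_zero_of_lt hlt]
end

section
/- Let A be an additive abelian group, let p and z be natural numbers, and let f, g : ℕ → A. Suppose that (i) for every integer k with 1 ≤ k ≤ p one has ∑_{j=0}^{k(z+1)} (-1)^j · C(k(z+1), j) • f(j) = 0 and ∑_{j=0}^{k(z+1)} (-1)^j · C(k(z+1), j) • g(j) = 0, and (ii) f(j) = g(j) for every j with p ≤ j ≤ p(z+1). Then f(0) = g(0). -/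
/-!
Put `h = f - g` and `T_n h = ∑_{j ≤ n} (-1)^j C(n,j) h(j)`, which is `(-1)^n Δⁿ h (0)`.
In the combination `∑_{k ≤ p} (-1)^(p-k) C(p,k) T_{k(z+1)} h`, the coefficient of `h(j)` is,
up to sign, the `p`-th finite difference with step `z+1` of the degree-`j` polynomial
`x ↦ C(x,j)`, so it vanishes for `j < p`; for `p ≤ j ≤ p(z+1)` it is `h(j)` that vanishes.
So the combination is `0`, while by (i) each of its terms with `k ≥ 1` vanishes, leaving
`(-1)^p h(0) = 0`.
-/

open Finset Polynomial Nat fwdDiff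

theorem Polynomial.fwdDiff_iter_eval_eq_zero_of_natDegree_lt {R : Type*} [CommRing R]
    {P : R[X]} {n : ℕ} (hP : P.natDegree < n) (h : R) : (Δ_[h])^[n] P.eval = 0 := by
  funext x
  have hQ : (P.comp (C h * X + C x)).natDegree < n :=
    natDegree_comp_le.trans_lt (by nlinarith [natDegree_linear_le (a := h) (b := x)])
  have := congr_fun (fwdDiff_iter_eq_zero_of_degree_lt hQ) 0
  rw [fwdDiff_iter_eq_sum_shift] at this ⊢
  simp only [eval_comp, eval_add, eval_mul, eval_C, eval_X, zero_add, nsmul_eq_mul, mul_one] at this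
  simpa only [Pi.zero_apply, nsmul_eq_mul, mul_comm, add_comm] using this

theorem sum_alternating_choose_mul_choose_mul_eq_zero {p j : ℕ} (hj : j < p) (m : ℕ) :
    ∑ k ∈ range (p + 1),
      ((-1 : ℤ) ^ (p - k) * p.choose k) * ((k * m).choose j : ℤ) = 0 := by
  have hP : (descPochhammer ℤ j).natDegree < p := by rwa [descPochhammer_natDegree]
  have := congr_fun (fwdDiff_iter_eval_eq_zero_of_natDegree_lt hP (m : ℤ)) 0
  simp only [fwdDiff_iter_eq_sum_shift, zero_add, Pi.zero_apply, smul_eq_mul, nsmul_eq_mul,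
    ← Nat.cast_mul, descPochhammer_eval_eq_descFactorial,
    descFactorial_eq_factorial_mul_choose] at this
  have hfac : ((j ! : ℕ) : ℤ) ≠ 0 := by exact_mod_cast j.factorial_ne_zero
  apply (mul_right_injective₀ hfac).eq_iff.mp
  rw [mul_zero, ← this, mul_sum]
  refine sum_congr rfl fun k _ => ?_
  push_cast; ring

section AlternatingChooseSum

variable {A : Type*} [AddCommGroup A]

def alternatingChooseSum (h : ℕ → A) (n : ℕ) : A :=
  ∑ j ∈ range (n + 1), ((-1 : ℤ) ^ j * n.choose j) • h j

theorem alternatingChooseSum_sub (f g : ℕ → A) (n : ℕ) :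
    alternatingChooseSum (f - g) n = alternatingChooseSum f n - alternatingChooseSum g n := by
  simp only [alternatingChooseSum, Pi.sub_apply, smul_sub, sum_sub_distrib]

@[simp]
theorem alternatingChooseSum_zero (h : ℕ → A) : alternatingChooseSum h 0 = h 0 := by
  simp [alternatingChooseSum]

theorem alternatingChooseSum_eq_sum_range_of_le (h : ℕ → A) {n N : ℕ} (hnN : n ≤ N) :
    alternatingChooseSum h n = ∑ j ∈ range (N + 1), ((-1 : ℤ) ^ j * n.choose j) • h j := by
  refine sum_subset (range_subset_range.mpr (by omega)) fun j _ hj => ?_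
  rw [choose_eq_zero_of_lt (by simpa using hj), Nat.cast_zero, mul_zero, zero_smul]

theorem sum_alternating_choose_smul_alternatingChooseSum_eq_zero {h : ℕ → A} {p m : ℕ}
    (hvanish : ∀ j, p ≤ j → j ≤ p * m → h j = 0) :
    ∑ k ∈ range (p + 1),
      ((-1 : ℤ) ^ (p - k) * p.choose k) • alternatingChooseSum h (k * m) = 0 := by
  have hle : ∀ k ∈ range (p + 1), k * m ≤ p * m := fun k hk =>
    Nat.mul_le_mul_right m (Nat.lt_succ_iff.mp (mem_range.mp hk))
  rw [sum_congr rfl fun k hk => by rw [alternatingChooseSum_eq_sum_range_of_le h (hle k hk)]]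
  simp only [smul_sum, smul_smul]
  rw [sum_comm]
  refine sum_eq_zero fun j hj => ?_
  rcases lt_or_ge j p with hjp | hpj
  · rw [← sum_smul]
    convert zero_smul ℤ (h j)
    rw [← mul_zero ((-1 : ℤ) ^ j), ← sum_alternating_choose_mul_choose_mul_eq_zero hjp m,
      mul_sum]
    exact sum_congr rfl fun k _ => by ring
  · simp [hvanish j hpj (Nat.lt_succ_iff.mp (mem_range.mp hj))]

end AlternatingChooseSum

/-- The combinatorial core of Theorem 9.7 of the paper: if `f g : ℕ → A` both annihilate
the alternating binomial sums of length `k(z+1)` for `1 ≤ k ≤ p`, and `f = g` on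
`p ≤ j ≤ p(z+1)`, then `f 0 = g 0`. -/
theorem stmt_4 {A : Type*} [AddCommGroup A] (p z : ℕ) (f g : ℕ → A)
    (hf : ∀ k : ℕ, 1 ≤ k → k ≤ p →
      ∑ j ∈ Finset.range (k * (z + 1) + 1),
        ((-1 : ℤ) ^ j * ((k * (z + 1)).choose j)) • f j = 0)
    (hg : ∀ k : ℕ, 1 ≤ k → k ≤ p →
      ∑ j ∈ Finset.range (k * (z + 1) + 1),
        ((-1 : ℤ) ^ j * ((k * (z + 1)).choose j)) • g j = 0)
    (hfg : ∀ j : ℕ, p ≤ j → j ≤ p * (z + 1) → f j = g j) :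
    f 0 = g 0 := by
  have hdiff : ∀ k ∈ range p, alternatingChooseSum (f - g) ((k + 1) * (z + 1)) = 0 := by
    intro k hk
    have hkp : k + 1 ≤ p := mem_range.mp hk
    rw [alternatingChooseSum_sub, sub_eq_zero]
    exact (hf (k + 1) k.succ_pos hkp).trans (hg (k + 1) k.succ_pos hkp).symm
  have hsum := sum_alternating_choose_smul_alternatingChooseSum_eq_zero (h := f - g) (m := z + 1)
    fun j hpj hjp => sub_eq_zero.mpr (hfg j hpj hjp)
  rw [sum_range_succ', sum_eq_zero fun k hk => by rw [hdiff k hk, smul_zero]] at hsum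
  have h0 : ((-1 : ℤ) ^ p) • (f 0 - g 0) = 0 := by simpa using hsum
  exact sub_eq_zero.mp ((isUnit_neg_one.pow p).smul_left_cancel.mp (h0.trans (smul_zero _).symm))
end

section
/- Let A be an additive abelian group, let p and z be natural numbers, and let f : ℕ → A satisfy ∑_{j=0}^{k(z+1)} (-1)^j · C(k(z+1), j) • f(j) = 0 for every integer k with 1 ≤ k ≤ p. Then f(0) = ∑_{j=p}^{p(z+1)} ( ∑_{k=⌈j/(z+1)⌉}^{p} (-1)^{k+j} · C(p,k) · C(k(z+1), j) ) • f(j). -/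
/-!
Since `f` kills the alternating binomial sums of every length `k(z+1)` with `1 ≤ k ≤ p`, `f 0` is
the combination `∑ₖ (-1)ᵏ C(p,k) • (∑ⱼ (-1)ʲ C(k(z+1),j) • f j)`, in which only `k = 0` survives.
Exchanging the sums, the coefficient of `f j` is `∑ₖ (-1)^(k+j) C(p,k) C(k(z+1),j)`, which up to
sign is the `p`-th forward difference with step `z+1` at `0` of `x ↦ C(x,j)`. That function is a
polynomial of degree `j`, so the coefficient vanishes for `j < p` (Lemma 9.4); for `j ≥ p` the
terms with `k(z+1) < j` are zero, which gives the lower bound `⌈j/(z+1)⌉`.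
-/

open Finset Function fwdDiff fwdDiff_aux

section
variable {M G : Type*} [AddCommMonoid M] [AddCommGroup G]

lemma fwdDiffₗ_nsmul (h : M) (m : ℕ) :
    fwdDiffₗ M G (m • h) = (∑ i ∈ range m, shiftₗ M G h ^ i) * (shiftₗ M G h - 1) := by
  have hshift : shiftₗ M G (m • h) = shiftₗ M G h ^ m :=
    LinearMap.ext fun f ↦ funext fun y ↦ by rw [shiftₗ_apply, shiftₗ_pow_apply]
  rw [geom_sum_mul, ← hshift, shiftₗ, add_sub_cancel_right]

lemma fwdDiff_iter_nsmul_eq_zero {h : M} {f : M → G} {n : ℕ} (hf : Δ_[h] ^[n] f = 0) (m : ℕ) :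
    Δ_[m • h] ^[n] f = 0 := by
  set S := shiftₗ M G h
  have hcomm : Commute (∑ i ∈ range m, S ^ i) (S - 1) :=
    Commute.sum_left _ _ _ fun i _ ↦ ((Commute.refl S).sub_right (Commute.one_right S)).pow_left i
  have hS : S - 1 = fwdDiffₗ M G h := by simp only [S, shiftₗ, add_sub_cancel_right]
  rw [← coe_fwdDiffₗ_pow, fwdDiffₗ_nsmul, hcomm.mul_pow, Module.End.mul_apply, hS,
    coe_fwdDiffₗ_pow, hf, map_zero]

end

lemma fwdDiff_iter_choose_eq_zero_of_lt {j n : ℕ} (h : j < n) :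
    Δ_[1] ^[n] (fun x ↦ x.choose j : ℕ → ℤ) = 0 := by
  have hconst : Δ_[1] ^[j] (fun x ↦ x.choose j : ℕ → ℤ) = fun _ ↦ 1 := by
    simpa using fwdDiff_iter_choose 0 j
  obtain ⟨k, rfl⟩ := Nat.exists_eq_add_of_lt h
  rw [add_assoc, add_comm, iterate_add_apply, hconst, iterate_succ_apply, fwdDiff_const]
  exact iterate_fixed (fwdDiff_const 1 0) k

theorem sum_neg_one_pow_mul_choose_mul_choose_eq_zero {p j : ℕ} (hj : j < p) (m : ℕ) :
    ∑ k ∈ range (p + 1), (-1 : ℤ) ^ (k + j) * p.choose k * (k * m).choose j = 0 := by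
  have hdiff := fwdDiff_iter_eq_sum_shift (m • 1) (fun x : ℕ ↦ (x.choose j : ℤ)) p 0
  rw [fwdDiff_iter_nsmul_eq_zero (fwdDiff_iter_choose_eq_zero_of_lt hj), Pi.zero_apply] at hdiff
  simp only [zero_add, smul_eq_mul, mul_one] at hdiff
  calc _ = (-1) ^ (p + j) *
        ∑ k ∈ range (p + 1), (-1 : ℤ) ^ (p - k) * p.choose k * (k * m).choose j := by
        rw [mul_sum]
        refine sum_congr rfl fun k hk ↦ ?_
        have hkp := mem_range.mp hk
        have hsign : (-1 : ℤ) ^ (k + j) = (-1) ^ (p + j) * (-1) ^ (p - k) := by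
          rw [← pow_add]
          exact neg_one_pow_congr (by simp only [Nat.even_iff]; omega)
        rw [hsign]
        ring
    _ = 0 := by rw [← hdiff, mul_zero]

lemma mul_lt_of_lt_toNat_ceil_div_s5 {j m k : ℕ} (hm : 0 < m) (hk : k < ⌈(j : ℚ) / m⌉.toNat) :
    k * m < j := by
  have : (k : ℚ) < j / m := by exact_mod_cast Int.lt_ceil.mp (Int.lt_toNat.mp hk)
  rw [lt_div_iff₀ (by positivity)] at this
  exact_mod_cast this

lemma sum_neg_one_pow_choose_smul_sum_comm {A : Type*} [AddCommGroup A] (f : ℕ → A) (p m : ℕ) :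
    ∑ k ∈ range (p + 1), ((-1 : ℤ) ^ k * p.choose k) •
        ∑ j ∈ range (k * m + 1), ((-1 : ℤ) ^ j * (k * m).choose j) • f j =
      ∑ j ∈ range (p * m + 1),
        (∑ k ∈ range (p + 1), (-1 : ℤ) ^ (k + j) * p.choose k * (k * m).choose j) • f j := by
  have hextend : ∀ k ∈ range (p + 1),
      ∑ j ∈ range (k * m + 1), ((-1 : ℤ) ^ j * (k * m).choose j) • f j =
        ∑ j ∈ range (p * m + 1), ((-1 : ℤ) ^ j * (k * m).choose j) • f j := by
    intro k hk
    have hkm : k * m ≤ p * m := Nat.mul_le_mul_right m (Nat.lt_succ_iff.mp (mem_range.mp hk))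
    refine sum_subset (range_subset_range.mpr (by omega)) fun j _ hj ↦ ?_
    rw [Nat.choose_eq_zero_of_lt (by simpa using hj), Nat.cast_zero, mul_zero, zero_smul]
  rw [sum_congr rfl fun k hk ↦ congrArg _ (hextend k hk)]
  simp only [smul_sum, smul_smul, sum_smul]
  rw [sum_comm]
  refine sum_congr rfl fun j _ ↦ sum_congr rfl fun k _ ↦ ?_
  congr 1
  ring

/-- The chain of equalities in the proof of Theorem 9.7: if `f : ℕ → A` annihilates the
alternating binomial sums of length `k(z+1)` for `1 ≤ k ≤ p`, then
`f 0 = ∑_{j=p}^{p(z+1)} (∑_{k=⌈j/(z+1)⌉}^{p} (-1)^{k+j} C(p,k) C(k(z+1), j)) • f j`. -/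
theorem stmt_5 {A : Type*} [AddCommGroup A] (p z : ℕ) (f : ℕ → A)
    (hf : ∀ k : ℕ, 1 ≤ k → k ≤ p →
      ∑ j ∈ Finset.range (k * (z + 1) + 1),
        ((-1 : ℤ) ^ j * ((k * (z + 1)).choose j)) • f j = 0) :
    f 0 = ∑ j ∈ Finset.Icc p (p * (z + 1)),
      (∑ k ∈ Finset.Icc (⌈(j : ℚ) / (z + 1)⌉).toNat p,
          (-1 : ℤ) ^ (k + j) * (p.choose k) * ((k * (z + 1)).choose j)) • f j := by
  set c : ℕ → ℤ := fun j ↦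
    ∑ k ∈ range (p + 1), (-1 : ℤ) ^ (k + j) * p.choose k * (k * (z + 1)).choose j
  have hf0 : f 0 = ∑ k ∈ range (p + 1), ((-1 : ℤ) ^ k * p.choose k) •
      ∑ j ∈ range (k * (z + 1) + 1), ((-1 : ℤ) ^ j * (k * (z + 1)).choose j) • f j := by
    rw [sum_eq_single_of_mem 0 (by simp) fun k hk hk0 ↦ by
      rw [hf k (Nat.one_le_iff_ne_zero.mpr hk0) (Nat.lt_succ_iff.mp (mem_range.mp hk)), smul_zero]]
    simp
  have hdrop :
      ∑ j ∈ range (p * (z + 1) + 1), c j • f j = ∑ j ∈ Icc p (p * (z + 1)), c j • f j := by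
    refine (sum_subset (fun j hj ↦ ?_) fun j hj hjp ↦ ?_).symm
    · simp only [mem_Icc, mem_range] at hj ⊢; omega
    · simp only [mem_Icc, mem_range] at hj hjp
      rw [show c j = 0 from sum_neg_one_pow_mul_choose_mul_choose_eq_zero (by omega) _, zero_smul]
  have hceil : ∀ j, c j = ∑ k ∈ Icc (⌈(j : ℚ) / (z + 1)⌉).toNat p,
      (-1 : ℤ) ^ (k + j) * p.choose k * (k * (z + 1)).choose j := by
    intro j
    refine (sum_subset (fun k hk ↦ ?_) fun k hk hkj ↦ ?_).symm
    · simp only [mem_Icc, mem_range] at hk ⊢; omega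
    · have hlt : k < (⌈(j : ℚ) / ((z + 1 : ℕ) : ℚ)⌉).toNat := by
        simp only [mem_Icc, mem_range] at hk hkj; push_cast; omega
      rw [Nat.choose_eq_zero_of_lt (mul_lt_of_lt_toNat_ceil_div_s5 z.succ_pos hlt), Nat.cast_zero,
        mul_zero]
  rw [hf0, sum_neg_one_pow_choose_smul_sum_comm, hdrop]
  exact sum_congr rfl fun j _ ↦ by rw [hceil]
end
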